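/- (Bias of the OME-IPS estimator.) Under the OME recommendation setup, the bias of the OME-IPS estimator equals (1/|D|)·| Σ_{(u,i): r*_{u,i}=1} [ ((p_{u,i}·ω11 − p̂_{u,i})/p̂_{u,i})·ℓ_{u,i}(1) + (p_{u,i}·ω01/p̂_{u,i})·ℓ_{u,i}(0) ] + Σ_{(u,i): r*_{u,i}=0} [ (p_{u,i}·ω10/p̂_{u,i})·ℓ_{u,i}(1) + ((p_{u,i}·ω00 − p̂_{u,i})/p̂_{u,i})·ℓ_{u,i}(0) ] |, where ω11 = (1−ρ01−ρ̂10)/(1−ρ̂01−ρ̂10), ω01 = (ρ01−ρ̂01)/(1−ρ̂01−ρ̂10), ω10 = (ρ10−ρ̂10)/(1−ρ̂01−ρ̂10), ω00 = (1−ρ̂01−ρ10)/(1−ρ̂01−ρ̂10). -/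

import Mathlib

/-!
Each summand of the OME-IPS estimator depends on one coordinate of the observation pattern and
one of the rating pattern, so by linearity and independence its expectation is
`(p / p̂) · E[ẽ]`. Under a rating `r ~ Bernoulli q` the surrogate has mean
`((q - ρ̂10) ℓ(1) + (1 - q - ρ̂01) ℓ(0)) / (1 - ρ̂01 - ρ̂10)`; the substitutions `q = 1 - ρ01`
and `q = ρ10` produce the weights `ω11, ω01` and `ω10, ω00`.
-/

open Finset

/-- Expectation of a functional `g` of jointly independent families of Bernoulli random
variables `o d ~ Bernoulli (p d)` (observation indicators) and `r d ~ Bernoulli (q d)`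
(observed ratings), encoded as a weighted sum over all realizations. -/
noncomputable def expectOR {D : Type*} [Fintype D] [DecidableEq D] (p q : D → ℝ)
    (g : (D → Bool) → (D → Bool) → ℝ) : ℝ :=
  ∑ o : D → Bool, ∑ r : D → Bool,
    ((∏ d, (if o d then p d else 1 - p d)) * (∏ d, (if r d then q d else 1 - q d))) * g o r

theorem Fintype.sum_pi_prod_mul_apply_of_sum_eq_one {ι κ R : Type*} [Fintype ι] [DecidableEq ι]
    [Fintype κ] [CommSemiring R] (w : ι → κ → R) (hw : ∀ i, ∑ j, w i j = 1) (i₀ : ι) (f : κ → R) :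
    ∑ x : ι → κ, (∏ i, w i (x i)) * f (x i₀) = ∑ j, w i₀ j * f j := by
  -- Absorbing `f` into the `i₀`-th factor turns the sum of products into a product of sums.
  have hfactor : ∀ x : ι → κ, (∏ i, w i (x i)) * f (x i₀) =
      ∏ i, w i (x i) * (if i = i₀ then f (x i) else 1) := fun x => by
    rw [prod_mul_distrib, prod_ite_eq' i₀ (fun i => f (x i))]
  have hsum : ∀ i, ∑ j, w i j * (if i = i₀ then f j else 1) =
      if i = i₀ then ∑ j, w i₀ j * f j else 1 := fun i => by
    split_ifs with h
    · subst h; rfl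
    · simp only [mul_one, hw i]
  simp_rw [hfactor]
  rw [← prod_sum (fun i j => w i j * (if i = i₀ then f j else 1))]
  simp_rw [hsum]
  exact prod_ite_eq' i₀ _

section Bernoulli

variable {D : Type*} [Fintype D] [DecidableEq D]

def bernoulliWeight (p : D → ℝ) (o : D → Bool) : ℝ :=
  ∏ d, if o d then p d else 1 - p d

theorem sum_bernoulliWeight_mul_apply (p : D → ℝ) (d₀ : D) (f : Bool → ℝ) :
    ∑ o, bernoulliWeight p o * f (o d₀) = p d₀ * f true + (1 - p d₀) * f false := by
  unfold bernoulliWeight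
  rw [Fintype.sum_pi_prod_mul_apply_of_sum_eq_one (fun d (b : Bool) => if b then p d else 1 - p d)
    (fun d => by simp) d₀ f]
  simp

theorem expectOR_eq_sum_bernoulliWeight (p q : D → ℝ) (g : (D → Bool) → (D → Bool) → ℝ) :
    expectOR p q g = ∑ o, ∑ r, bernoulliWeight p o * bernoulliWeight q r * g o r :=
  rfl

theorem expectOR_const_mul (p q : D → ℝ) (c : ℝ) (g : (D → Bool) → (D → Bool) → ℝ) :
    expectOR p q (fun o r => c * g o r) = c * expectOR p q g := by
  simp only [expectOR_eq_sum_bernoulliWeight, mul_sum]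
  exact sum_congr rfl fun o _ => sum_congr rfl fun r _ => by ring

theorem expectOR_sum_mul (p q : D → ℝ) (F G : D → Bool → ℝ) :
    expectOR p q (fun o r => ∑ d, F d (o d) * G d (r d)) =
      ∑ d, (p d * F d true + (1 - p d) * F d false) *
        (q d * G d true + (1 - q d) * G d false) := by
  calc expectOR p q (fun o r => ∑ d, F d (o d) * G d (r d))
      = ∑ o, ∑ r, ∑ d, (bernoulliWeight p o * F d (o d)) * (bernoulliWeight q r * G d (r d)) := by
        simp only [expectOR_eq_sum_bernoulliWeight, mul_sum]
        exact sum_congr rfl fun o _ => sum_congr rfl fun r _ => sum_congr rfl fun d _ => by ring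
    _ = ∑ d, (∑ o, bernoulliWeight p o * F d (o d)) * ∑ r, bernoulliWeight q r * G d (r d) := by
        simp only [sum_mul_sum]
        exact sum_comm_cycle
    _ = _ := by simp only [sum_bernoulliWeight_mul_apply]

end Bernoulli

noncomputable def surrogateLoss (ρh01 ρh10 : ℝ) (ℓ : Bool → ℝ) (b : Bool) : ℝ :=
  if b then ((1 - ρh10) * ℓ true - ρh01 * ℓ false) / (1 - ρh01 - ρh10)
  else ((1 - ρh01) * ℓ false - ρh10 * ℓ true) / (1 - ρh01 - ρh10)

theorem bernoulli_mean_surrogateLoss (ρh01 ρh10 q : ℝ) (ℓ : Bool → ℝ) :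
    q * surrogateLoss ρh01 ρh10 ℓ true + (1 - q) * surrogateLoss ρh01 ρh10 ℓ false =
      ((q - ρh10) * ℓ true + (1 - q - ρh01) * ℓ false) / (1 - ρh01 - ρh10) := by
  simp only [surrogateLoss, if_true, Bool.false_eq_true, if_false]
  ring

theorem sum_filter_eq_true_add_sum_filter_eq_false {D M : Type*} [Fintype D] [AddCommMonoid M]
    (b : D → Bool) (f g : D → M) :
    ∑ d ∈ univ.filter (fun d => b d = true), f d + ∑ d ∈ univ.filter (fun d => b d = false), g d =
      ∑ d, if b d then f d else g d := by
  simp [sum_ite]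

theorem bias_OME_IPS_general {D : Type*} [Fintype D] [DecidableEq D]
    (rstar : D → Bool) (l : D → Bool → ℝ) (p phat : D → ℝ)
    (ρ01 ρ10 ρh01 ρh10 : ℝ)
    (hphat : ∀ d, 0 < phat d) :
    |expectOR p (fun d => if rstar d then 1 - ρ01 else ρ10)
        (fun o r => (1 / (Fintype.card D : ℝ)) * ∑ d,
          ((if o d then (1 : ℝ) else 0) / phat d) *
            (if r d then ((1 - ρh10) * l d true - ρh01 * l d false) / (1 - ρh01 - ρh10)
             else ((1 - ρh01) * l d false - ρh10 * l d true) / (1 - ρh01 - ρh10))) -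
        (1 / (Fintype.card D : ℝ)) * ∑ d, l d (rstar d)| =
      (1 / (Fintype.card D : ℝ)) *
        |(∑ d ∈ univ.filter (fun d => rstar d = true),
            (((p d * ((1 - ρ01 - ρh10) / (1 - ρh01 - ρh10)) - phat d) / phat d) * l d true +
              (p d * ((ρ01 - ρh01) / (1 - ρh01 - ρh10)) / phat d) * l d false)) +
          (∑ d ∈ univ.filter (fun d => rstar d = false),
            ((p d * ((ρ10 - ρh10) / (1 - ρh01 - ρh10)) / phat d) * l d true +
              ((p d * ((1 - ρh01 - ρ10) / (1 - ρh01 - ρh10)) - phat d) / phat d) * l d false))| := by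
  set q : D → ℝ := fun d => if rstar d then 1 - ρ01 else ρ10
  have hmean : expectOR p q (fun o r => (1 / (Fintype.card D : ℝ)) *
      ∑ d, ((if o d then (1 : ℝ) else 0) / phat d) * surrogateLoss ρh01 ρh10 (l d) (r d)) =
      (1 / (Fintype.card D : ℝ)) * ∑ d, p d / phat d *
        (((q d - ρh10) * l d true + (1 - q d - ρh01) * l d false) / (1 - ρh01 - ρh10)) := by
    rw [expectOR_const_mul, expectOR_sum_mul p q (fun d o => (if o then 1 else 0) / phat d)
      (fun d => surrogateLoss ρh01 ρh10 (l d))]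
    simp only [bernoulli_mean_surrogateLoss, if_true, Bool.false_eq_true, if_false]
    congr 1
    exact sum_congr rfl fun d _ => by ring
  unfold surrogateLoss at hmean
  rw [hmean, ← mul_sub, ← sum_sub_distrib, abs_mul, abs_of_nonneg (by positivity),
    sum_filter_eq_true_add_sum_filter_eq_false]
  congr 2
  refine sum_congr rfl fun d _ => ?_
  have hphat_ne : phat d ≠ 0 := (hphat d).ne'
  cases h : rstar d <;> simp only [q, h, if_true, Bool.false_eq_true, if_false] <;>
    field_simp <;> ring

/-- **Bias of the OME-IPS estimator.** Under the OME recommendation setup,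
with true ratings `rstar`, losses `l d true = ℓ_{u,i}(1)` and `l d false = ℓ_{u,i}(0)`,
true propensities `p`, learned propensities `phat`, true error rates `ρ01, ρ10` and
estimated error rates `ρh01, ρh10`, the bias `|E[ε_OME-IPS] − P*|` of the OME-IPS
estimator has the stated explicit form. -/
theorem bias_OME_IPS {D : Type*} [Fintype D] [DecidableEq D] [Nonempty D]
    (rstar : D → Bool) (l : D → Bool → ℝ) (p phat : D → ℝ)
    (ρ01 ρ10 ρh01 ρh10 : ℝ)
    (hp0 : ∀ d, 0 < p d) (hp1 : ∀ d, p d ≤ 1) (hphat : ∀ d, 0 < phat d)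
    (h01 : 0 ≤ ρ01) (h10 : 0 ≤ ρ10) (hsum : ρ01 + ρ10 < 1)
    (hh01 : 0 ≤ ρh01) (hh10 : 0 ≤ ρh10) (hhsum : ρh01 + ρh10 < 1) :
    |expectOR p (fun d => if rstar d then 1 - ρ01 else ρ10)
        (fun o r => (1 / (Fintype.card D : ℝ)) * ∑ d,
          ((if o d then (1 : ℝ) else 0) / phat d) *
            (if r d then ((1 - ρh10) * l d true - ρh01 * l d false) / (1 - ρh01 - ρh10)
             else ((1 - ρh01) * l d false - ρh10 * l d true) / (1 - ρh01 - ρh10))) -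
        (1 / (Fintype.card D : ℝ)) * ∑ d, l d (rstar d)| =
      (1 / (Fintype.card D : ℝ)) *
        |(∑ d ∈ univ.filter (fun d => rstar d = true),
            (((p d * ((1 - ρ01 - ρh10) / (1 - ρh01 - ρh10)) - phat d) / phat d) * l d true +
              (p d * ((ρ01 - ρh01) / (1 - ρh01 - ρh10)) / phat d) * l d false)) +
          (∑ d ∈ univ.filter (fun d => rstar d = false),
            ((p d * ((ρ10 - ρh10) / (1 - ρh01 - ρh10)) / phat d) * l d true +
              ((p d * ((1 - ρh01 - ρ10) / (1 - ρh01 - ρh10)) - phat d) / phat d) * l d false))| :=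
  bias_OME_IPS_general rstar l p phat ρ01 ρ10 ρh01 ρh10 hphat
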